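/- Let n ≥ 3 and let P(a⃗|x⃗) = Q(a⃗_g|x⃗_g)·R(a⃗_ḡ|x⃗_ḡ) be a product distribution across a bipartition {g, ḡ} of the n parties into nonempty groups, where Q and R are arbitrary (no-signalling) probability distributions on their groups. If parties i ∈ g and j ∈ ḡ lie in different groups, then the lifted CHSH-variant I^{ij}_{0⃗|0⃗}(P) = P(0ᵢ0ⱼ0⃗|0ᵢ0ⱼ0⃗) − P(1ᵢ0ⱼ0⃗|1ᵢ0ⱼ0⃗) − P(0ᵢ1ⱼ0⃗|0ᵢ1ⱼ0⃗) − P(0ᵢ0ⱼ0⃗|1ᵢ1ⱼ0⃗) satisfies I^{ij}_{0⃗|0⃗}(P) ≤ 0. -/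

import Mathlib

open Finset

noncomputable section

/-- `Q` depends only on the outcomes and inputs of the parties in `S`. -/
def DepOn {n : ℕ} (S : Finset (Fin n))
    (Q : (Fin n → Fin 2) → (Fin n → Fin 2) → ℝ) : Prop :=
  ∀ a a' x x' : Fin n → Fin 2, (∀ k ∈ S, a k = a' k) → (∀ k ∈ S, x k = x' k) →
    Q a x = Q a' x'

/-- `Q` is a probability distribution on the group `S` of parties (represented as a
function of all `n` coordinates that depends only on those in `S`; summing over all
outcome strings then gives `2^(n−|S|)`). -/
def IsDistOn {n : ℕ} (S : Finset (Fin n))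
    (Q : (Fin n → Fin 2) → (Fin n → Fin 2) → ℝ) : Prop :=
  (∀ a x, 0 ≤ Q a x) ∧ (∀ x, ∑ a, Q a x = 2 ^ (n - S.card)) ∧ DepOn S Q

/-- `Q` is no-signalling: for each party `k`, the marginal over `a k` does not depend on
the input `x k`. -/
def IsNS {n : ℕ} (Q : (Fin n → Fin 2) → (Fin n → Fin 2) → ℝ) : Prop :=
  ∀ (k : Fin n) (a x x' : Fin n → Fin 2), (∀ l, l ≠ k → x l = x' l) →
    ∑ v, Q (Function.update a k v) x = ∑ v, Q (Function.update a k v) x'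

/-- The all-zero outcome/input string. -/
def zvec (n : ℕ) : Fin n → Fin 2 := fun _ => 0

/-- The string which is zero except at positions `i` (value `u`) and `j` (value `v`). -/
def upd2 (n : ℕ) (i j : Fin n) (u v : Fin 2) : Fin n → Fin 2 :=
  Function.update (Function.update (zvec n) i u) j v

/-- The lifted CHSH-variant `I^{ij}_{0⃗|0⃗}` on parties `i, j`. -/
def liftedCHSH (n : ℕ) (P : (Fin n → Fin 2) → (Fin n → Fin 2) → ℝ) (i j : Fin n) : ℝ :=
  P (upd2 n i j 0 0) (upd2 n i j 0 0) - P (upd2 n i j 1 0) (upd2 n i j 1 0)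
    - P (upd2 n i j 0 1) (upd2 n i j 0 1) - P (upd2 n i j 0 0) (upd2 n i j 1 1)

/-!
Among the parties `i, j`, the factor `Q` sees only party `i` and `R` only party `j`, so the four
terms of `I^{ij}_{0⃗|0⃗}(P)` are products `p(a|x) q(b|y)` of two single-party behaviours, each
with input-independent normalisation by no-signalling. On such products the CHSH-variant is
nonpositive by an elementary inequality.
-/

/-- `I^{ij}_{0⃗|0⃗}` evaluated on the product of two single-party behaviours `p(a|x)`, `q(b|y)`. -/
def chshProduct {α : Type*} [Ring α] (p q : Fin 2 → Fin 2 → α) : α :=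
  p 0 0 * q 0 0 - p 1 1 * q 0 0 - p 0 0 * q 1 1 - p 0 1 * q 0 1

/- Eliminating `p 1 1` (and, if `p 1 0 ≤ p 0 1`, also `q 0 0`) through the no-signalling
constraints writes the expression as minus a sum of three nonnegative products. -/
theorem chshProduct_nonpos {α : Type*} [CommRing α] [LinearOrder α] [IsStrictOrderedRing α]
    {p q : Fin 2 → Fin 2 → α} (hp : ∀ a x, 0 ≤ p a x) (hq : ∀ b y, 0 ≤ q b y)
    (hp_ns : p 0 0 + p 1 0 = p 0 1 + p 1 1) (hq_ns : q 0 0 + q 1 0 = q 0 1 + q 1 1) :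
    chshProduct p q ≤ 0 := by
  unfold chshProduct
  rcases le_total (p 0 1) (p 1 0) with h | h
  · linear_combination q 0 0 * hp_ns + mul_nonneg (sub_nonneg.2 h) (hq 0 0) +
      mul_nonneg (hp 0 0) (hq 1 1) + mul_nonneg (hp 0 1) (hq 0 1)
  · linear_combination (p 0 1 - p 1 0) * hq_ns + (q 0 0 - q 1 1) * hp_ns +
      mul_nonneg (sub_nonneg.2 h) (hq 1 0) + mul_nonneg (hp 1 0) (hq 0 1) +
      mul_nonneg (hp 1 1) (hq 1 1)

section upd2

variable {n : ℕ} {i j k : Fin n}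

theorem upd2_apply_of_ne_left (hk : k ≠ i) (u u' v : Fin 2) :
    upd2 n i j u v k = upd2 n i j u' v k := by
  by_cases hkj : k = j
  · simp [upd2, hkj]
  · simp [upd2, hk, hkj]

theorem upd2_apply_of_ne_right (hk : k ≠ j) (u v v' : Fin 2) :
    upd2 n i j u v k = upd2 n i j u v' k := by
  simp [upd2, hk]

theorem update_upd2_left (hij : i ≠ j) (u v u' : Fin 2) :
    Function.update (upd2 n i j u v) i u' = upd2 n i j u' v := by
  rw [upd2, Function.update_comm hij.symm, Function.update_idem, upd2]

theorem update_upd2_right (u v v' : Fin 2) :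
    Function.update (upd2 n i j u v) j v' = upd2 n i j u v' :=
  Function.update_idem _ _ _

end upd2

section

variable {n : ℕ} {S : Finset (Fin n)} {Q : (Fin n → Fin 2) → (Fin n → Fin 2) → ℝ} {i j : Fin n}

theorem DepOn.upd2_eq_of_right_not_mem (hQ : DepOn S Q) (hj : j ∉ S) (u x v y v' y' : Fin 2) :
    Q (upd2 n i j u v) (upd2 n i j x y) = Q (upd2 n i j u v') (upd2 n i j x y') :=
  hQ _ _ _ _ (fun _ hk => upd2_apply_of_ne_right (ne_of_mem_of_not_mem hk hj) _ _ _)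
    (fun _ hk => upd2_apply_of_ne_right (ne_of_mem_of_not_mem hk hj) _ _ _)

theorem DepOn.upd2_eq_of_left_not_mem (hQ : DepOn S Q) (hi : i ∉ S) (u x v y u' x' : Fin 2) :
    Q (upd2 n i j u v) (upd2 n i j x y) = Q (upd2 n i j u' v) (upd2 n i j x' y) :=
  hQ _ _ _ _ (fun _ hk => upd2_apply_of_ne_left (ne_of_mem_of_not_mem hk hi) _ _ _)
    (fun _ hk => upd2_apply_of_ne_left (ne_of_mem_of_not_mem hk hi) _ _ _)

theorem IsNS.upd2_left (hQ : IsNS Q) (hij : i ≠ j) (v y : Fin 2) :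
    Q (upd2 n i j 0 v) (upd2 n i j 0 y) + Q (upd2 n i j 1 v) (upd2 n i j 0 y) =
      Q (upd2 n i j 0 v) (upd2 n i j 1 y) + Q (upd2 n i j 1 v) (upd2 n i j 1 y) := by
  have h := hQ i (upd2 n i j 0 v) (upd2 n i j 0 y) (upd2 n i j 1 y)
    (fun _ hl => upd2_apply_of_ne_left hl _ _ _)
  simpa only [Fin.sum_univ_two, update_upd2_left hij] using h

theorem IsNS.upd2_right (hQ : IsNS Q) (u x : Fin 2) :
    Q (upd2 n i j u 0) (upd2 n i j x 0) + Q (upd2 n i j u 1) (upd2 n i j x 0) =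
      Q (upd2 n i j u 0) (upd2 n i j x 1) + Q (upd2 n i j u 1) (upd2 n i j x 1) := by
  have h := hQ j (upd2 n i j u 0) (upd2 n i j x 0) (upd2 n i j x 1)
    (fun _ hl => upd2_apply_of_ne_right hl _ _ _)
  simpa only [Fin.sum_univ_two, update_upd2_right] using h

end

theorem liftedCHSH_eq_chshProduct {n : ℕ} {g : Finset (Fin n)} {i j : Fin n}
    (hi : i ∈ g) (hj : j ∉ g) {Q R P : (Fin n → Fin 2) → (Fin n → Fin 2) → ℝ}
    (hQ : DepOn g Q) (hR : DepOn gᶜ R) (hP : ∀ a x, P a x = Q a x * R a x) :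
    liftedCHSH n P i j = chshProduct (fun a x => Q (upd2 n i j a 0) (upd2 n i j x 0))
      (fun b y => R (upd2 n i j 0 b) (upd2 n i j 0 y)) := by
  have hi' : i ∉ gᶜ := fun h => Finset.mem_compl.mp h hi
  simp only [liftedCHSH, chshProduct, hP, hQ.upd2_eq_of_right_not_mem hj 0 0 1 1 0 0,
    hQ.upd2_eq_of_right_not_mem hj 0 1 0 1 0 0, hR.upd2_eq_of_left_not_mem hi' 1 1 0 0 0 0,
    hR.upd2_eq_of_left_not_mem hi' 0 1 0 1 0 0]

theorem stmt13_general (n : ℕ) (g : Finset (Fin n)) (i j : Fin n)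
    (hi : i ∈ g) (hj : j ∉ g)
    (Q R P : (Fin n → Fin 2) → (Fin n → Fin 2) → ℝ)
    (hQ : IsDistOn g Q) (hQNS : IsNS Q)
    (hR : IsDistOn gᶜ R) (hRNS : IsNS R)
    (hP : ∀ a x, P a x = Q a x * R a x) :
    liftedCHSH n P i j ≤ 0 := by
  have hij : i ≠ j := ne_of_mem_of_not_mem hi hj
  rw [liftedCHSH_eq_chshProduct hi hj hQ.2.2 hR.2.2 hP]
  exact chshProduct_nonpos (fun _ _ => hQ.1 _ _) (fun _ _ => hR.1 _ _)
    (hQNS.upd2_left hij 0 0) (hRNS.upd2_right 0 0)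

/-- if `P = Q·R` is a product across the bipartition `{g, gᶜ}` with
no-signalling factors, and parties `i ∈ g`, `j ∉ g` lie in different groups, then the
lifted CHSH-variant satisfies `I^{ij}_{0⃗|0⃗}(P) ≤ 0`. -/
theorem stmt13 (n : ℕ) (hn : 3 ≤ n) (g : Finset (Fin n)) (i j : Fin n)
    (hi : i ∈ g) (hj : j ∉ g)
    (Q R P : (Fin n → Fin 2) → (Fin n → Fin 2) → ℝ)
    (hQ : IsDistOn g Q) (hQNS : IsNS Q)
    (hR : IsDistOn gᶜ R) (hRNS : IsNS R)
    (hP : ∀ a x, P a x = Q a x * R a x) :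
    liftedCHSH n P i j ≤ 0 :=
  stmt13_general n g i j hi hj Q R P hQ hQNS hR hRNS hP

end
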